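/- Let G be a finite simple graph and v ∈ ker(G). Then every vertex u adjacent to v satisfies |N(u) ∩ ker(G)| ≥ 2, i.e., u has at least two neighbors in ker(G). -/

import Mathlib

open Finset

namespace CritGraph

variable {V : Type*} [Fintype V] [DecidableEq V]

/-- The neighborhood of a set of vertices `X`:
all vertices having at least one neighbor in `X`. -/
def nbhd (G : SimpleGraph V) [DecidableRel G.Adj] (X : Finset V) : Finset V :=
  univ.filter fun v => ∃ x ∈ X, G.Adj v x

/-- The difference `d(X) = |X| - |N(X)|` of a set of vertices `X`. -/
def diff (G : SimpleGraph V) [DecidableRel G.Adj] (X : Finset V) : ℤ :=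
  (X.card : ℤ) - ((nbhd G X).card : ℤ)

/-- A set of vertices is independent if no two of its vertices are adjacent. -/
def IsIndep (G : SimpleGraph V) (S : Finset V) : Prop :=
  ∀ u ∈ S, ∀ v ∈ S, ¬ G.Adj u v

instance (G : SimpleGraph V) [DecidableRel G.Adj] : DecidablePred (IsIndep G) := fun S =>
  inferInstanceAs (Decidable (∀ u ∈ S, ∀ v ∈ S, ¬ G.Adj u v))

/-- The critical difference `d_c(G) = max {d(X) : X ⊆ V}`. -/
def dC (G : SimpleGraph V) [DecidableRel G.Adj] : ℤ :=
  (univ : Finset V).powerset.sup' (Finset.powerset_nonempty _) (diff G)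

/-- The critical independence difference `id_c(G) = max {d(I) : I independent}`. -/
def idC (G : SimpleGraph V) [DecidableRel G.Adj] : ℤ :=
  ((univ : Finset V).powerset.filter (IsIndep G)).sup'
    ⟨∅, by simp [IsIndep]⟩ (diff G)

/-- `A` is a critical independent set: `A` is independent and
`d(A) = max {d(I) : I independent}`. -/
def IsCritIndep (G : SimpleGraph V) [DecidableRel G.Adj] (A : Finset V) : Prop :=
  IsIndep G A ∧ ∀ I : Finset V, IsIndep G I → diff G I ≤ diff G A

instance (G : SimpleGraph V) [DecidableRel G.Adj] : DecidablePred (IsCritIndep G) := fun A =>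
  inferInstanceAs (Decidable (IsIndep G A ∧ ∀ I : Finset V, IsIndep G I → diff G I ≤ diff G A))

/-- `ker(G)`: the intersection of all critical independent sets of `G`. -/
def kerG (G : SimpleGraph V) [DecidableRel G.Adj] : Finset V :=
  univ.filter fun v => ∀ A : Finset V, IsCritIndep G A → v ∈ A

/-- `G - v`: the induced subgraph of `G` on `V \ {v}`. -/
def deleteVert (G : SimpleGraph V) (v : V) : SimpleGraph {u : V // u ≠ v} :=
  G.comap Subtype.val

instance (G : SimpleGraph V) (v : V) [DecidableRel G.Adj] :
    DecidableRel (deleteVert G v).Adj := fun a b =>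
  inferInstanceAs (Decidable (G.Adj a.val b.val))

/-- `S` is an inclusion-minimal independent set with positive difference. -/
def MinPosIndep (G : SimpleGraph V) [DecidableRel G.Adj] (S : Finset V) : Prop :=
  IsIndep G S ∧ 0 < diff G S ∧ ∀ S' ⊂ S, ¬ (IsIndep G S' ∧ 0 < diff G S')

/-- `S` is a maximum independent set. -/
def IsMaxIndep (G : SimpleGraph V) (S : Finset V) : Prop :=
  IsIndep G S ∧ ∀ I : Finset V, IsIndep G I → I.card ≤ S.card

instance (G : SimpleGraph V) [DecidableRel G.Adj] : DecidablePred (IsMaxIndep G) := fun S =>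
  inferInstanceAs (Decidable (IsIndep G S ∧ ∀ I : Finset V, IsIndep G I → I.card ≤ S.card))

/-- `core(G)`: the intersection of all maximum independent sets of `G`. -/
def coreG (G : SimpleGraph V) [DecidableRel G.Adj] : Finset V :=
  univ.filter fun v => ∀ A : Finset V, IsMaxIndep G A → v ∈ A

/-! On independent sets the difference is supermodular in the form
`d(A) + d(B) ≤ d(I) + d(A ∩ B)`, where `I = (A \ N(B)) ∪ (B \ N(A))` is again independent.
Hence critical independent sets are closed under intersection, and `ker(G)` is itself critical.
If `v ∈ ker(G)` were the only neighbour of `u` in `ker(G)`, deleting `v` from `ker(G)` would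
also remove `u` from the neighbourhood, so `ker(G) \ {v}` would still be critical, which
contradicts `v ∈ ker(G)`. -/

omit [Fintype V] [DecidableEq V] in
lemma IsIndep.mono {G : SimpleGraph V} {S T : Finset V} (hS : IsIndep G S) (h : T ⊆ S) :
    IsIndep G T :=
  fun a ha b hb => hS a (h ha) b (h hb)

variable (G : SimpleGraph V) [DecidableRel G.Adj]

omit [DecidableEq V] in
lemma mem_nbhd {X : Finset V} {x : V} : x ∈ nbhd G X ↔ ∃ y ∈ X, G.Adj x y := by
  simp [nbhd]

omit [DecidableEq V] in
lemma nbhd_mono {X Y : Finset V} (h : X ⊆ Y) : nbhd G X ⊆ nbhd G Y := fun x hx => by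
  obtain ⟨y, hy, hxy⟩ := (mem_nbhd G).1 hx
  exact (mem_nbhd G).2 ⟨y, h hy, hxy⟩

lemma nbhd_union (X Y : Finset V) : nbhd G (X ∪ Y) = nbhd G X ∪ nbhd G Y := by
  ext x
  simp only [mem_union, mem_nbhd, or_and_right, exists_or]

variable {G}

omit [DecidableEq V] in
lemma IsIndep.disjoint_nbhd {S : Finset V} (hS : IsIndep G S) : Disjoint S (nbhd G S) := by
  refine disjoint_left.2 fun x hx hN => ?_
  obtain ⟨y, hy, hxy⟩ := (mem_nbhd G).1 hN
  exact hS x hx y hy hxy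

lemma IsIndep.nbhd_sdiff_nbhd_subset {A : Finset V} (hA : IsIndep G A) (B : Finset V) :
    nbhd G (A \ nbhd G B) ⊆ nbhd G A \ (A ∪ B) := fun x hx => by
  obtain ⟨y, hy, hxy⟩ := (mem_nbhd G).1 hx
  rw [mem_sdiff] at hy
  refine mem_sdiff.2 ⟨(mem_nbhd G).2 ⟨y, hy.1, hxy⟩, ?_⟩
  simp only [mem_union, not_or]
  exact ⟨fun hxA => hA x hxA y hy.1 hxy, fun hxB => hy.2 ((mem_nbhd G).2 ⟨x, hxB, hxy.symm⟩)⟩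

lemma IsIndep.sdiff_nbhd_union {A B : Finset V} (hA : IsIndep G A) (hB : IsIndep G B) :
    IsIndep G ((A \ nbhd G B) ∪ (B \ nbhd G A)) := by
  intro a ha b hb hab
  simp only [mem_union, mem_sdiff] at ha hb
  rcases ha with ⟨haA, haNB⟩ | ⟨haB, haNA⟩ <;> rcases hb with ⟨hbA, hbNB⟩ | ⟨hbB, hbNA⟩
  · exact hA a haA b hbA hab
  · exact haNB ((mem_nbhd G).2 ⟨b, hbB, hab⟩)
  · exact haNA ((mem_nbhd G).2 ⟨b, hbA, hab⟩)
  · exact hB a haB b hbB hab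

lemma IsIndep.diff_add_diff_le {A B : Finset V} (hA : IsIndep G A) (hB : IsIndep G B) :
    diff G A + diff G B ≤ diff G ((A \ nbhd G B) ∪ (B \ nbhd G A)) + diff G (A ∩ B) := by
  simp only [diff]
  set NA := nbhd G A
  set NB := nbhd G B
  have hANA := hA.disjoint_nbhd
  have hBNB := hB.disjoint_nbhd
  have hinter : (A \ NB) ∩ (B \ NA) = A ∩ B := by
    ext x
    simp only [mem_inter, mem_sdiff]
    constructor
    · rintro ⟨⟨hxA, -⟩, hxB, -⟩
      exact ⟨hxA, hxB⟩
    · rintro ⟨hxA, hxB⟩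
      exact ⟨⟨hxA, disjoint_left.1 hBNB hxB⟩, hxB, disjoint_left.1 hANA hxA⟩
  have hNI : nbhd G ((A \ NB) ∪ (B \ NA)) ⊆ (NA ∪ NB) \ (A ∪ B) := by
    rw [nbhd_union]
    refine union_subset ((hA.nbhd_sdiff_nbhd_subset B).trans ?_)
      ((hB.nbhd_sdiff_nbhd_subset A).trans ?_) <;>
    · intro x
      simp only [mem_sdiff, mem_union]
      tauto
  have hNAB : nbhd G (A ∩ B) ⊆ NA ∩ NB :=
    subset_inter (nbhd_mono G inter_subset_left) (nbhd_mono G inter_subset_right)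
  have hcross : #(A ∩ NB) + #(B ∩ NA) ≤ #((NA ∪ NB) ∩ (A ∪ B)) := by
    rw [← card_union_of_disjoint]
    · refine card_le_card fun x => ?_
      simp only [mem_union, mem_inter]
      tauto
    · exact disjoint_left.2 fun x hx hx' =>
        disjoint_left.1 hBNB (mem_inter.1 hx').1 (mem_inter.1 hx).2
  have h₁ := card_union_add_card_inter (A \ NB) (B \ NA)
  have h₂ := card_le_card hNI
  have h₃ := card_le_card hNAB
  have h₄ := card_sdiff_add_card_inter (NA ∪ NB) (A ∪ B)
  have h₅ := card_union_add_card_inter NA NB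
  have h₆ := card_inter_add_card_sdiff A NB
  have h₇ := card_inter_add_card_sdiff B NA
  rw [hinter] at h₁
  omega

lemma IsCritIndep.inter {A B : Finset V} (hA : IsCritIndep G A) (hB : IsCritIndep G B) :
    IsCritIndep G (A ∩ B) := by
  have h := hA.1.diff_add_diff_le hB.1
  have hmax := hA.2 _ (hA.1.sdiff_nbhd_union hB.1)
  exact ⟨hA.1.mono inter_subset_left, fun I hI => (hB.2 I hI).trans (by linarith)⟩

variable (G) in
lemma exists_isCritIndep : ∃ A, IsCritIndep G A := by
  obtain ⟨A, hA, hmax⟩ := exists_max_image (univ.filter (IsIndep G)) (diff G)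
    ⟨∅, mem_filter.2 ⟨mem_univ _, by simp [IsIndep]⟩⟩
  exact ⟨A, (mem_filter.1 hA).2, fun I hI => hmax I (mem_filter.2 ⟨mem_univ _, hI⟩)⟩

variable (G) in
lemma kerG_isCritIndep : IsCritIndep G (kerG G) := by
  obtain ⟨A, hA, hmin⟩ := exists_min_image (univ.filter (IsCritIndep G)) card
    (let ⟨A, hA⟩ := exists_isCritIndep G; ⟨A, mem_filter.2 ⟨mem_univ _, hA⟩⟩)
  rw [mem_filter] at hA
  -- a critical independent set of minimum size lies inside every other one, so it is `kerG G`
  have hsub : ∀ B, IsCritIndep G B → A ⊆ B := fun B hB =>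
    (eq_of_subset_of_card_le inter_subset_left
      (hmin _ (mem_filter.2 ⟨mem_univ _, hA.2.inter hB⟩))) ▸ inter_subset_right
  have hker : kerG G = A := by
    ext x
    simp only [kerG, mem_filter, mem_univ, true_and]
    exact ⟨fun hx => hx A hA.2, fun hx B hB => hsub B hB hx⟩
  exact hker ▸ hA.2

lemma diff_le_diff_erase {K : Finset V} {u v : V} (hv : v ∈ K) (hu : u ∈ nbhd G K)
    (hu' : u ∉ nbhd G (K.erase v)) : diff G K ≤ diff G (K.erase v) := by
  have hN : nbhd G (K.erase v) ⊆ (nbhd G K).erase u := fun x hx =>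
    mem_erase.2 ⟨fun hxu => hu' (hxu ▸ hx), nbhd_mono G (erase_subset v K) hx⟩
  have h₁ := card_le_card hN
  rw [card_erase_of_mem hu] at h₁
  have h₂ := card_erase_of_mem hv
  have h₃ := card_pos.2 ⟨u, hu⟩
  simp only [diff]
  omega

/-- If `v ∈ ker(G)`, then every neighbor `u` of `v` has at least two
neighbors in `ker(G)`. -/
theorem two_le_card_neighbors_in_kerG (G : SimpleGraph V) [DecidableRel G.Adj]
    (v : V) (hv : v ∈ kerG G) (u : V) (hu : G.Adj u v) :
    2 ≤ (G.neighborFinset u ∩ kerG G).card := by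
  by_contra hlt
  have hK := kerG_isCritIndep G
  have hu' : u ∉ nbhd G ((kerG G).erase v) := fun h => by
    obtain ⟨w, hw, huw⟩ := (mem_nbhd G).1 h
    refine hlt (one_lt_card.2 ⟨w, ?_, v, ?_, ne_of_mem_erase hw⟩) <;>
      simp only [mem_inter, SimpleGraph.mem_neighborFinset]
    exacts [⟨huw, mem_of_mem_erase hw⟩, ⟨hu, hv⟩]
  have hcrit : IsCritIndep G ((kerG G).erase v) :=
    ⟨hK.1.mono (erase_subset v _), fun I hI =>
      (hK.2 I hI).trans (diff_le_diff_erase hv ((mem_nbhd G).2 ⟨v, hv, hu⟩) hu')⟩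
  exact notMem_erase v _ ((mem_filter.1 hv).2 _ hcrit)

end CritGraph
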